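/- arXiv:0711.0201 — 8 statements merged into one kernel-verified Lean document; each statement's English description precedes it below -/
import Mathlib

section
/- Let P be a finite p-group of class 2 and exponent p (p odd). Then there exist subgroups Q and A of P such that Z(Q) = Q' = P', A ≤ Z(P), and P = Q × A (internal direct product). -/
/-!
Let `Z = Z(P)` and `P' ≤ Z`. Both `P/P'` and `Z` are elementary abelian, i.e. vector spaces over
`𝔽_p`, so subspaces have complements. Take `Q` to be the preimage in `P` of a complement of the
image of `Z` in `P/P'`, and `A` a complement of `P'` in `Z`. Then `P = ZQ` and `Q ∩ Z = P'`.
Since `Z` is central, `P = ZQ` forces `Q' = P'` and makes the centralizer of `Q` equal to `Z`,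
so `Z(Q) = Q ∩ Z = P'`; and `Q ∩ A ≤ P' ∩ A = 1`, `QA ≥ QP'A = QZ = P`.
-/

open scoped commutatorElement

namespace Subgroup

variable {G : Type*} [Group G]

theorem complementedLattice_of_pow_eq_one [IsMulCommutative G] {p : ℕ} (hp : p.Prime)
    (hG : ∀ x : G, x ^ p = 1) : ComplementedLattice (Subgroup G) := by
  let : CommGroup G := { mul_comm := mul_comm' }
  have : Fact p.Prime := ⟨hp⟩
  let : Module (ZMod p) (Additive G) := AddCommGroup.zmodModule (n := p) fun x => hG x.toMul
  exact ((AddSubgroup.toZModSubmodule (M := Additive G) p).symm.trans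
    toAddSubgroup.symm).complementedLattice

theorem exists_le_sup_eq_inf_eq_bot_of_le {H K : Subgroup G} (hHK : H ≤ K)
    [ComplementedLattice (Subgroup K)] : ∃ A ≤ K, H ⊔ A = K ∧ H ⊓ A = ⊥ := by
  obtain ⟨B, hB⟩ := exists_isCompl (H.subgroupOf K)
  refine ⟨B.map K.subtype, map_subtype_le B, ?_, ?_⟩
  · rw [← map_subgroupOf_eq_of_le hHK, ← map_sup, hB.sup_eq_top, ← MonoidHom.range_eq_map,
      range_subtype]
  · rw [← map_subgroupOf_eq_of_le hHK, ← map_inf_eq _ _ _ K.subtype_injective, hB.inf_eq_bot,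
      map_bot]

theorem exists_ker_le_sup_eq_top_inf_le_ker {N : Type*} [Group N]
    [ComplementedLattice (Subgroup N)] {f : G →* N} (hf : Function.Surjective f)
    (H : Subgroup G) : ∃ Q, f.ker ≤ Q ∧ H ⊔ Q = ⊤ ∧ H ⊓ Q ≤ f.ker := by
  obtain ⟨W, hW⟩ := exists_isCompl (H.map f)
  refine ⟨W.comap f, ker_le_comap f W, ?_, ?_⟩
  · rw [eq_top_iff, ← comap_top f, ← hW.sup_eq_top, ← comap_sup_eq f _ _ hf, comap_map_eq]
    exact sup_le (sup_le le_sup_left (le_sup_of_le_right (ker_le_comap f W))) le_sup_right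
  · calc H ⊓ W.comap f ≤ (H.map f).comap f ⊓ W.comap f :=
        inf_le_inf_right _ (le_comap_map f H)
      _ = f.ker := by rw [← comap_inf, hW.inf_eq_bot, MonoidHom.comap_bot]

theorem commutatorElement_mul_left_of_mem_center {z : G} (hz : z ∈ center G) (g h : G) :
    ⁅z * g, h⁆ = ⁅g, h⁆ := by
  rw [commutatorElement_def, commutatorElement_def, mul_inv_rev]
  calc z * g * h * (g⁻¹ * z⁻¹) * h⁻¹ = z * (g * h * g⁻¹) * z⁻¹ * h⁻¹ := by group
    _ = g * h * g⁻¹ * h⁻¹ := by rw [← mem_center_iff.mp hz, mul_inv_cancel_right]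

theorem commutatorElement_mul_mul_of_mem_center {z₁ z₂ : G} (hz₁ : z₁ ∈ center G)
    (hz₂ : z₂ ∈ center G) (g h : G) : ⁅z₁ * g, z₂ * h⁆ = ⁅g, h⁆ := by
  rw [commutatorElement_mul_left_of_mem_center hz₁, ← commutatorElement_inv,
    commutatorElement_mul_left_of_mem_center hz₂, commutatorElement_inv]

variable {Q : Subgroup G}

theorem exists_mem_center_mul_of_center_sup_eq_top (hQ : center G ⊔ Q = ⊤) (g : G) :
    ∃ z ∈ center G, ∃ q ∈ Q, z * q = g := by
  have hg : g ∈ ((center G ⊔ Q : Subgroup G) : Set G) := by simp [hQ]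
  rwa [normal_mul, Set.mem_mul] at hg

theorem centralizer_eq_center_of_center_sup_eq_top (hQ : center G ⊔ Q = ⊤) :
    centralizer (Q : Set G) = center G := by
  refine le_antisymm (fun x hx => mem_center_iff.mpr fun g => ?_) (center_le_centralizer _)
  obtain ⟨z, hz, q, hq, rfl⟩ := exists_mem_center_mul_of_center_sup_eq_top hQ g
  rw [mul_assoc, hx q hq, ← mul_assoc, ← mem_center_iff.mp hz x, mul_assoc]

theorem commutator_eq_of_center_sup_eq_top (hQ : center G ⊔ Q = ⊤) :
    ⁅Q, Q⁆ = _root_.commutator G := by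
  refine le_antisymm (commutator_mono le_top le_top) (commutator_le.mpr fun g _ h _ => ?_)
  obtain ⟨z₁, hz₁, q₁, hq₁, rfl⟩ := exists_mem_center_mul_of_center_sup_eq_top hQ g
  obtain ⟨z₂, hz₂, q₂, hq₂, rfl⟩ := exists_mem_center_mul_of_center_sup_eq_top hQ h
  rw [commutatorElement_mul_mul_of_mem_center hz₁ hz₂]
  exact commutator_mem_commutator hq₁ hq₂

end Subgroup

theorem stmt_0_general {P : Type*} [Group P] {p : ℕ} (hp : p.Prime)
    (hexp : ∀ x : P, x ^ p = 1) (hclass : commutator P ≤ Subgroup.center P) :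
    ∃ Q A : Subgroup P,
      Q ⊓ Subgroup.centralizer (Q : Set P) = ⁅Q, Q⁆ ∧
      ⁅Q, Q⁆ = commutator P ∧
      A ≤ Subgroup.center P ∧ Q ⊓ A = ⊥ ∧ Q ⊔ A = ⊤ := by
  have hof : Function.Surjective (Abelianization.of : P →* Abelianization P) :=
    fun x => QuotientGroup.induction_on x fun y => ⟨y, rfl⟩
  have := Subgroup.complementedLattice_of_pow_eq_one hp fun x => by
    obtain ⟨y, rfl⟩ := hof x
    rw [← map_pow, hexp, map_one]
  obtain ⟨Q, hCQ, hZQ_sup, hZQ_inf⟩ :=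
    Subgroup.exists_ker_le_sup_eq_top_inf_le_ker hof (Subgroup.center P)
  rw [Abelianization.ker_of] at hCQ hZQ_inf
  have := Subgroup.complementedLattice_of_pow_eq_one (G := Subgroup.center P) hp
    fun z => Subtype.ext (hexp z)
  obtain ⟨A, hAZ, hCA_sup, hCA_inf⟩ := Subgroup.exists_le_sup_eq_inf_eq_bot_of_le hclass
  have hQZ : Q ⊓ Subgroup.center P = commutator P :=
    le_antisymm (inf_comm Q _ ▸ hZQ_inf) (le_inf hCQ hclass)
  have hQQ := Subgroup.commutator_eq_of_center_sup_eq_top hZQ_sup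
  refine ⟨Q, A, ?_, hQQ, hAZ, ?_, ?_⟩
  · rw [Subgroup.centralizer_eq_center_of_center_sup_eq_top hZQ_sup, hQQ, hQZ]
  · rw [← inf_eq_right.mpr hAZ, ← inf_assoc, hQZ, hCA_inf]
  · rw [eq_top_iff, ← hZQ_sup, ← hCA_sup]
    exact sup_le (sup_le (hCQ.trans le_sup_left) le_sup_right) le_sup_left

/-- For a finite `p`-group `P` of class 2 and exponent `p` (`p` odd), there exist
subgroups `Q` and `A` of `P` such that `Z(Q) = Q' = P'`, `A ≤ Z(P)`, and
`P = Q × A` internally. -/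
theorem stmt_0 {P : Type*} [Group P] [Finite P] {p : ℕ} (hp : p.Prime) (hodd : Odd p)
    (hexp : ∀ x : P, x ^ p = 1) (hclass : commutator P ≤ Subgroup.center P) :
    ∃ Q A : Subgroup P,
      Q ⊓ Subgroup.centralizer (Q : Set P) = ⁅Q, Q⁆ ∧
      ⁅Q, Q⁆ = commutator P ∧
      A ≤ Subgroup.center P ∧ Q ⊓ A = ⊥ ∧ Q ⊔ A = ⊤ :=
  stmt_0_general hp hexp hclass
end

section
/- Let P be a finite p-group of class 2 and exponent p (p odd). Suppose Q and R are subgroups with Z(Q) = Q' = P' = R' = Z(R) and P = QZ(P) = RZ(P). If A is a complement satisfying P = Q × A with A ≤ Z(P), then also P = R × A, and there is an automorphism of P sending Q to R which is the identity on Z(P). -/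
section Aux

variable {P : Type*} [Group P]

private lemma aux_central_normal (A : Subgroup P) (hA : A ≤ Subgroup.center P) : A.Normal := by
  refine ⟨fun n hn g => ?_⟩
  rw [Subgroup.mem_center_iff.mp (hA hn) g, mul_inv_cancel_right]
  exact hn

private lemma aux_sup_center_normal (Q : Subgroup P) (h : Q ⊔ Subgroup.center P = ⊤) :
    Q.Normal := by
  refine ⟨fun x hx g => ?_⟩
  have hg : g ∈ Q ⊔ Subgroup.center P := h ▸ Subgroup.mem_top g
  rw [← SetLike.mem_coe, Subgroup.mul_normal] at hg
  obtain ⟨q, hq, z, hz, rfl⟩ := hg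
  have hzx : z * x * z⁻¹ = x := by
    rw [← Subgroup.mem_center_iff.mp hz x, mul_inv_cancel_right]
  have : q * z * x * (q * z)⁻¹ = q * (z * x * z⁻¹) * q⁻¹ := by group
  rw [this, hzx]
  exact Q.mul_mem (Q.mul_mem hq hx) (Q.inv_mem hq)

private lemma aux_decomp (Q A : Subgroup P) [A.Normal] (h : Q ⊔ A = ⊤) (g : P) :
    ∃ q ∈ Q, ∃ a ∈ A, q * a = g := by
  have hg : g ∈ Q ⊔ A := h ▸ Subgroup.mem_top g
  rw [← SetLike.mem_coe, Subgroup.mul_normal] at hg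
  obtain ⟨q, hq, a, ha, hqa⟩ := hg
  exact ⟨q, hq, a, ha, hqa⟩

end Aux

/-- If `Q`, `R` satisfy `Z(Q) = Q' = P' = R' = Z(R)` and `P = QZ(P) = RZ(P)`, and `A` is a
central complement to `Q`, then `A` is also a complement to `R`, and there is an automorphism
of `P` sending `Q` to `R` which is the identity on `Z(P)`. -/
theorem stmt_1 {P : Type*} [Group P] [Finite P] {p : ℕ} (hp : p.Prime) (hodd : Odd p)
    (hexp : ∀ x : P, x ^ p = 1) (hclass : commutator P ≤ Subgroup.center P)
    (Q R A : Subgroup P)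
    (hQZ : Q ⊓ Subgroup.centralizer (Q : Set P) = ⁅Q, Q⁆)
    (hQc : ⁅Q, Q⁆ = commutator P)
    (hRZ : R ⊓ Subgroup.centralizer (R : Set P) = ⁅R, R⁆)
    (hRc : ⁅R, R⁆ = commutator P)
    (hQsup : Q ⊔ Subgroup.center P = ⊤)
    (hRsup : R ⊔ Subgroup.center P = ⊤)
    (hA : A ≤ Subgroup.center P) (hQA : Q ⊓ A = ⊥) (hQA' : Q ⊔ A = ⊤) :
    R ⊓ A = ⊥ ∧ R ⊔ A = ⊤ ∧
      ∃ φ : P ≃* P, Subgroup.map φ.toMonoidHom Q = R ∧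
        ∀ x ∈ Subgroup.center P, φ x = x := by
  haveI hAnorm : A.Normal := aux_central_normal A hA
  haveI hQnorm : Q.Normal := aux_sup_center_normal Q hQsup
  haveI hRnorm : R.Normal := aux_sup_center_normal R hRsup
  -- commutator subgroup is contained in Q and in R
  have hcommQ : commutator P ≤ Q := by
    rw [← hQc]
    exact Subgroup.commutator_le.mpr fun x hx y hy =>
      Q.mul_mem (Q.mul_mem (Q.mul_mem hx hy) (Q.inv_mem hx)) (Q.inv_mem hy)
  have hcommR : commutator P ≤ R := by
    rw [← hRc]
    exact Subgroup.commutator_le.mpr fun x hx y hy =>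
      R.mul_mem (R.mul_mem (R.mul_mem hx hy) (R.inv_mem hx)) (R.inv_mem hy)
  -- Q ∩ Z(P) ≤ commutator P, similarly for R
  have hQcen : Q ⊓ Subgroup.center P ≤ commutator P := by
    rw [← hQc, ← hQZ]
    exact inf_le_inf_left Q (Subgroup.center_le_centralizer (Q : Set P))
  have hRcen : R ⊓ Subgroup.center P ≤ commutator P := by
    rw [← hRc, ← hRZ]
    exact inf_le_inf_left R (Subgroup.center_le_centralizer (R : Set P))
  -- commutator P ∩ A = ⊥
  have hcommA : commutator P ⊓ A ≤ ⊥ := hQA ▸ inf_le_inf_right A hcommQ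
  -- R ⊓ A = ⊥
  have hRA : R ⊓ A = ⊥ :=
    le_bot_iff.mp (fun x hx => hcommA ⟨hRcen ⟨hx.1, hA hx.2⟩, hx.2⟩)
  -- Z(P) ≤ commutator P ⊔ A
  have hZPA : Subgroup.center P ≤ commutator P ⊔ A := by
    intro z hz
    obtain ⟨q, hq, a, ha, hqa⟩ := aux_decomp Q A hQA' z
    have hqz : q = z * a⁻¹ := by rw [← hqa, mul_inv_cancel_right]
    have hqcen : q ∈ Subgroup.center P := by
      rw [hqz]; exact (Subgroup.center P).mul_mem hz ((Subgroup.center P).inv_mem (hA ha))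
    have hqcomm : q ∈ commutator P := hQcen ⟨hq, hqcen⟩
    rw [← hqa]
    exact Subgroup.mul_mem _ (Subgroup.mem_sup_left hqcomm) (Subgroup.mem_sup_right ha)
  -- R ⊔ A = ⊤
  have hRA' : R ⊔ A = ⊤ := by
    refine le_antisymm le_top ?_
    calc (⊤ : Subgroup P) = R ⊔ Subgroup.center P := hRsup.symm
      _ ≤ R ⊔ (commutator P ⊔ A) := sup_le_sup_left hZPA R
      _ = (R ⊔ commutator P) ⊔ A := by rw [sup_assoc]
      _ = R ⊔ A := by rw [sup_of_le_left hcommR]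
  refine ⟨hRA, hRA', ?_⟩
  -- the isomorphism A ≃* P ⧸ Q
  have eA_bij : Function.Bijective ((QuotientGroup.mk' Q).comp A.subtype) := by
    constructor
    · rw [injective_iff_map_eq_one]
      intro a h1
      have : (a : P) ∈ Q := (QuotientGroup.eq_one_iff _).mp h1
      have : (a : P) ∈ Q ⊓ A := ⟨this, a.2⟩
      rw [hQA] at this
      exact Subtype.ext this
    · intro x
      obtain ⟨g, rfl⟩ := QuotientGroup.mk'_surjective Q x
      obtain ⟨q, hq, a, ha, hqa⟩ := aux_decomp Q A hQA' g
      refine ⟨⟨a, ha⟩, ?_⟩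
      show QuotientGroup.mk' Q a = QuotientGroup.mk' Q g
      rw [← hqa]
      simp only [map_mul]
      rw [show (QuotientGroup.mk' Q) q = 1 from (QuotientGroup.eq_one_iff _).mpr hq, one_mul]
  -- the isomorphism R ≃* P ⧸ A
  have eR_bij : Function.Bijective ((QuotientGroup.mk' A).comp R.subtype) := by
    constructor
    · rw [injective_iff_map_eq_one]
      intro r h1
      have : (r : P) ∈ A := (QuotientGroup.eq_one_iff _).mp h1
      have : (r : P) ∈ R ⊓ A := ⟨r.2, this⟩
      rw [hRA] at this
      exact Subtype.ext this
    · intro x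
      obtain ⟨g, rfl⟩ := QuotientGroup.mk'_surjective A x
      obtain ⟨r, hr, a, ha, hra⟩ := aux_decomp R A hRA' g
      refine ⟨⟨r, hr⟩, ?_⟩
      show QuotientGroup.mk' A r = QuotientGroup.mk' A g
      rw [← hra]
      simp only [map_mul]
      rw [show (QuotientGroup.mk' A) a = 1 from (QuotientGroup.eq_one_iff _).mpr ha, mul_one]
  set eA : A ≃* P ⧸ Q := MulEquiv.ofBijective _ eA_bij with heA
  set eR : R ≃* P ⧸ A := MulEquiv.ofBijective _ eR_bij with heR
  have eA_apply : ∀ a : A, eA a = QuotientGroup.mk' Q (a : P) := fun a => rfl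
  have eR_apply : ∀ r : R, eR r = QuotientGroup.mk' A (r : P) := fun r => rfl
  set α : P →* A := eA.symm.toMonoidHom.comp (QuotientGroup.mk' Q) with hα
  set ρ : P →* R := eR.symm.toMonoidHom.comp (QuotientGroup.mk' A) with hρ
  -- key pointwise facts about the projections
  have αA : ∀ a : P, (ha : a ∈ A) → α a = ⟨a, ha⟩ := by
    intro a ha
    have : eA ⟨a, ha⟩ = QuotientGroup.mk' Q a := eA_apply ⟨a, ha⟩
    simp only [hα, MonoidHom.comp_apply, MulEquiv.coe_toMonoidHom]
    rw [← this, MulEquiv.symm_apply_apply]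
  have αQ : ∀ q : P, q ∈ Q → α q = 1 := by
    intro q hq
    simp only [hα, MonoidHom.comp_apply, MulEquiv.coe_toMonoidHom]
    rw [show (QuotientGroup.mk' Q) q = 1 from (QuotientGroup.eq_one_iff _).mpr hq, map_one]
  have ρR : ∀ r : P, (hr : r ∈ R) → ρ r = ⟨r, hr⟩ := by
    intro r hr
    have : eR ⟨r, hr⟩ = QuotientGroup.mk' A r := eR_apply ⟨r, hr⟩
    simp only [hρ, MonoidHom.comp_apply, MulEquiv.coe_toMonoidHom]
    rw [← this, MulEquiv.symm_apply_apply]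
  have ρA : ∀ a : P, a ∈ A → ρ a = 1 := by
    intro a ha
    simp only [hρ, MonoidHom.comp_apply, MulEquiv.coe_toMonoidHom]
    rw [show (QuotientGroup.mk' A) a = 1 from (QuotientGroup.eq_one_iff _).mpr ha, map_one]
  -- the endomorphism φ₀
  set φ₀ : P →* P :=
    { toFun := fun x => (ρ x : P) * (α x : P)
      map_one' := by simp
      map_mul' := by
        intro x y
        simp only [map_mul, Subgroup.coe_mul]
        have hc : (ρ y : P) * (α x : P) = (α x : P) * (ρ y : P) :=
          Subgroup.mem_center_iff.mp (hA (α x).2) (ρ y : P)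
        calc (ρ x : P) * (ρ y : P) * ((α x : P) * (α y : P))
            = (ρ x : P) * ((ρ y : P) * (α x : P)) * (α y : P) := by group
          _ = (ρ x : P) * ((α x : P) * (ρ y : P)) * (α y : P) := by rw [hc]
          _ = (ρ x : P) * (α x : P) * ((ρ y : P) * (α y : P)) := by group } with hφ₀
  have φ₀_apply : ∀ x : P, φ₀ x = (ρ x : P) * (α x : P) := fun x => rfl
  -- φ₀ fixes A pointwise
  have fixA : ∀ a : P, a ∈ A → φ₀ a = a := by
    intro a ha
    rw [φ₀_apply, ρA a ha, αA a ha, Subgroup.coe_one, one_mul]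
  -- φ₀ fixes Q ∩ R pointwise
  have fixQR : ∀ z : P, z ∈ Q → z ∈ R → φ₀ z = z := by
    intro z hzQ hzR
    rw [φ₀_apply, ρR z hzR, αQ z hzQ, Subgroup.coe_one, mul_one]
  -- φ₀ maps Q into R
  have φ₀Q : ∀ q : P, q ∈ Q → φ₀ q = (ρ q : P) := by
    intro q hq
    rw [φ₀_apply, αQ q hq, Subgroup.coe_one, mul_one]
  -- φ₀ fixes the center pointwise
  have fixZ : ∀ z : P, z ∈ Subgroup.center P → φ₀ z = z := by
    intro z hz
    have h1 : eA (α z) = QuotientGroup.mk' Q z := eA.apply_symm_apply _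
    have h2 : QuotientGroup.mk' Q ((α z : A) : P) = QuotientGroup.mk' Q z := h1
    have hqQ : z * ((α z : A) : P)⁻¹ ∈ Q := by
      have hk : QuotientGroup.mk' Q (z * ((α z : A) : P)⁻¹) = 1 := by
        rw [map_mul, map_inv, h2, mul_inv_cancel]
      rw [← QuotientGroup.ker_mk' Q]
      exact MonoidHom.mem_ker.mpr hk
    have hqcen : z * ((α z : A) : P)⁻¹ ∈ Subgroup.center P :=
      (Subgroup.center P).mul_mem hz ((Subgroup.center P).inv_mem (hA (α z).2))
    have hqR : z * ((α z : A) : P)⁻¹ ∈ R := hcommR (hQcen ⟨hqQ, hqcen⟩)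
    have hdec : z = (z * ((α z : A) : P)⁻¹) * ((α z : A) : P) := by group
    calc φ₀ z = φ₀ ((z * ((α z : A) : P)⁻¹) * ((α z : A) : P)) := by rw [← hdec]
      _ = φ₀ (z * ((α z : A) : P)⁻¹) * φ₀ ((α z : A) : P) := map_mul _ _ _
      _ = (z * ((α z : A) : P)⁻¹) * ((α z : A) : P) := by
          rw [fixQR _ hqQ hqR, fixA _ (α z).2]
      _ = z := hdec.symm
  -- φ₀ is injective
  have φ₀_inj : Function.Injective φ₀ := by
    rw [injective_iff_map_eq_one]
    intro x hx
    rw [φ₀_apply] at hx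
    have h1 : (ρ x : P) = ((α x : A) : P)⁻¹ :=
      eq_inv_of_mul_eq_one_left hx
    have h2 : (ρ x : P) ∈ R ⊓ A := ⟨(ρ x).2, h1 ▸ A.inv_mem (α x).2⟩
    rw [hRA, Subgroup.mem_bot] at h2
    have h3 : QuotientGroup.mk' A x = 1 := by
      have : eR (ρ x) = QuotientGroup.mk' A x := eR.apply_symm_apply _
      rw [← this, show (ρ x) = 1 from Subtype.ext h2, map_one]
    have hxA : x ∈ A := by
      rw [← QuotientGroup.ker_mk' A]
      exact MonoidHom.mem_ker.mpr h3
    rw [← fixA x hxA]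
    exact hx
  have φ₀_bij : Function.Bijective φ₀ := Finite.injective_iff_bijective.mp φ₀_inj
  refine ⟨MulEquiv.ofBijective φ₀ φ₀_bij, ?_, fun x hx => fixZ x hx⟩
  apply le_antisymm
  · rintro _ ⟨q, hq, rfl⟩
    show φ₀ q ∈ R
    rw [φ₀Q q hq]
    exact (ρ q).2
  · intro r hr
    obtain ⟨q, hq, a, ha, hqa⟩ := aux_decomp Q A hQA' r
    refine ⟨q, hq, ?_⟩
    show φ₀ q = r
    rw [φ₀Q q hq]
    have hmk : QuotientGroup.mk' A q = QuotientGroup.mk' A r := by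
      rw [← hqa, map_mul,
        show (QuotientGroup.mk' A) a = 1 from (QuotientGroup.eq_one_iff _).mpr ha, mul_one]
    have : ρ q = ⟨r, hr⟩ := by
      simp only [hρ, MonoidHom.comp_apply, MulEquiv.coe_toMonoidHom]
      rw [hmk, ← eR_apply ⟨r, hr⟩, MulEquiv.symm_apply_apply]
    rw [this]
end

section
/- Let P be a finite p-group of class 2 and exponent p, and let 𝓗 be a fully refined central decomposition of P. If Q is generated by the members of 𝓗 not contained in Z(P) and A is generated by the members of 𝓗 contained in Z(P), then P = Q × A, Q' = Z(Q), and Q'A = Z(P). -/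
/-- A central decomposition of a group `G`: a set of subgroups whose distinct members
commute elementwise, which generates `G`, but no proper subset of which generates `G`. -/
def IsCentralDecomp (G : Type*) [Group G] (𝓗 : Set (Subgroup G)) : Prop :=
  (∀ H ∈ 𝓗, ∀ K ∈ 𝓗, H ≠ K → ∀ x ∈ H, ∀ y ∈ K, Commute x y) ∧
  sSup 𝓗 = ⊤ ∧
  ∀ 𝓙 ⊆ 𝓗, sSup 𝓙 = ⊤ → 𝓙 = 𝓗

/-- A group is centrally indecomposable if its only central decomposition is `{⊤}`. -/
def CentrallyIndecomposable (G : Type*) [Group G] : Prop :=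
  ∀ 𝓗 : Set (Subgroup G), IsCentralDecomp G 𝓗 → 𝓗 = {⊤}

/-!
The key fact is about a single centrally indecomposable finite group `G` of prime exponent `p`:
a central element `z` outside `G'` generates `G`. Indeed, take `M ≥ G'` maximal with `z ∉ M`;
then `M` is normal and, since every nontrivial cyclic subgroup has order `p`, any `x ∉ M` can be
exchanged against `z`, so `M ⊔ ⟨z⟩ = G` is a central decomposition with `M ≠ G`, forcing
`⟨z⟩ = G`.

Applied to the members of `𝓗`, this gives `Z(H) ≤ H'` for the noncentral members (a cyclic
member would be abelian, hence central), and it makes every central member `K` cyclic of order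
`p` and therefore disjoint from the join of the other members, by irredundancy of `𝓗`. The
centre of the central product `Q` is the product of the centres of its factors, whence
`Z(Q) = Q'`; the central members are independent and independent of `Q`, whence `Q ∩ A = 1`.
-/

namespace Subgroup

variable {G : Type*} [Group G]

theorem exists_mul_eq_of_mem_sup_of_le_centralizer {H W : Subgroup G}
    (hHW : H ≤ centralizer (W : Set G)) {x : G} (hx : x ∈ H ⊔ W) :
    ∃ h ∈ H, ∃ w ∈ W, h * w = x := by
  rwa [← SetLike.mem_coe, coe_mul_of_left_le_normalizer_right H W
    (hHW.trans (centralizer_le_normalizer _))] at hx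

theorem mem_sup_zpowers_of_mem_sup_zpowers {p : ℕ} (hp : p.Prime) {M : Subgroup G} [M.Normal]
    {x z : G} (hx : x ^ p = 1) (hz : z ∈ M ⊔ zpowers x) (hzM : z ∉ M) :
    x ∈ M ⊔ zpowers z := by
  obtain ⟨m, hm, y, hy, rfl⟩ := mem_sup_of_normal_left.mp hz
  obtain ⟨n, rfl⟩ := mem_zpowers_iff.mp hy
  have hxn : x ^ n ≠ 1 := fun h => hzM (by rwa [h, mul_one])
  have hord : orderOf x = p := orderOf_eq_prime (hp := ⟨hp⟩) hx (by rintro rfl; simp at hxn)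
  have hcop : n.gcd (orderOf x) = 1 := by
    rw [Int.gcd_comm, ← Int.isCoprime_iff_gcd_eq_one, hord,
      Prime.coprime_iff_not_dvd (Nat.prime_iff_prime_int.mp hp), ← hord,
      orderOf_dvd_iff_zpow_eq_one]
    exact hxn
  have hxn_mem : x ^ n ∈ M ⊔ zpowers (m * x ^ n) := by
    simpa using mul_mem (mem_sup_left (inv_mem hm)) (mem_sup_right (mem_zpowers (m * x ^ n)))
  exact zpowers_le.mpr hxn_mem (mem_zpowers_zpow_iff.mpr hcop)

theorem sSup_inf_centralizer_le {𝓢 : Set (Subgroup G)} (h𝓢 : 𝓢.Finite)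
    (hcomm : 𝓢.Pairwise fun H K => H ≤ centralizer (K : Set G)) {T : Subgroup G}
    (hT : ∀ H ∈ 𝓢, H ⊓ centralizer (H : Set G) ≤ T) :
    sSup 𝓢 ⊓ centralizer ((sSup 𝓢 : Subgroup G) : Set G) ≤ T := by
  refine Set.Finite.induction_on_subset
    (motive := fun 𝓣 _ => sSup 𝓣 ⊓ centralizer ((sSup 𝓣 : Subgroup G) : Set G) ≤ T) 𝓢 h𝓢
    (by simp) ?_
  intro H 𝓣 hH h𝓣 hH𝓣 ih x ⟨hx, hxc⟩
  rw [sSup_insert] at hx hxc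
  have h𝓣H : sSup 𝓣 ≤ centralizer (H : Set G) :=
    sSup_le fun K hK => hcomm (h𝓣 hK) hH (ne_of_mem_of_not_mem hK hH𝓣)
  have hH𝓣 : H ≤ centralizer ((sSup 𝓣 : Subgroup G) : Set G) := le_centralizer_iff.mp h𝓣H
  obtain ⟨h, hh, w, hw, rfl⟩ := exists_mul_eq_of_mem_sup_of_le_centralizer hH𝓣 hx
  have hwc : w ∈ centralizer ((sSup 𝓣 : Subgroup G) : Set G) := (mul_mem_cancel_left (hH𝓣 hh)).mp
    (centralizer_le (SetLike.coe_subset_coe.mpr le_sup_right) hxc)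
  have hhc : h ∈ centralizer (H : Set G) := (mul_mem_cancel_right (h𝓣H hw)).mp
    (centralizer_le (SetLike.coe_subset_coe.mpr le_sup_left) hxc)
  exact mul_mem (hT H hH ⟨hh, hhc⟩) (ih ⟨hw, hwc⟩)

theorem disjoint_sSup_of_le_center {𝓣 : Set (Subgroup G)} (h𝓣 : 𝓣.Finite)
    (hcen : ∀ K ∈ 𝓣, K ≤ center G) {B : Subgroup G}
    (hdisj : ∀ K ∈ 𝓣, Disjoint K (B ⊔ sSup (𝓣 \ {K}))) : Disjoint B (sSup 𝓣) := by
  refine Set.Finite.induction_on_subset (motive := fun 𝓤 _ => Disjoint B (sSup 𝓤)) 𝓣 h𝓣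
    (by simp) ?_
  intro K 𝓤 hK h𝓤 hK𝓤 ih
  rw [disjoint_def] at ih ⊢
  intro x hxB hx
  rw [sSup_insert] at hx
  obtain ⟨k, hk, w, hw, rfl⟩ := exists_mul_eq_of_mem_sup_of_le_centralizer
    ((hcen K hK).trans (center_le_centralizer _)) hx
  have h𝓤 : sSup 𝓤 ≤ sSup (𝓣 \ {K}) :=
    sSup_le_sSup fun L hL => ⟨h𝓤 hL, ne_of_mem_of_not_mem hL hK𝓤⟩
  have hk1 : k = 1 := by
    refine disjoint_def.mp (hdisj K hK) hk ?_
    simpa using mul_mem (mem_sup_left hxB) (inv_mem (mem_sup_right (h𝓤 hw)))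
  subst hk1
  rw [one_mul] at hxB ⊢
  exact ih hxB hw

theorem center_le_inf_centralizer_sup {Q A : Subgroup G} (hQA : Q ⊔ A = ⊤)
    (hA : A ≤ center G) : center G ≤ Q ⊓ centralizer (Q : Set G) ⊔ A := by
  intro z hz
  have hAQ : A ≤ centralizer (Q : Set G) := hA.trans (center_le_centralizer _)
  obtain ⟨q, hq, a, ha, rfl⟩ :=
    exists_mul_eq_of_mem_sup_of_le_centralizer (le_centralizer_iff.mp hAQ) (hQA ▸ mem_top z)
  exact mul_mem_sup ⟨hq, (mul_mem_cancel_right (hAQ ha)).mp (center_le_centralizer _ hz)⟩ ha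

end Subgroup

open Subgroup

namespace CentrallyIndecomposable

variable {G : Type*} [Group G]

theorem eq_top_or_eq_top_of_sup_eq_top
    (hG : CentrallyIndecomposable G) {M N : Subgroup G} (hMN : M ≤ centralizer (N : Set G))
    (hsup : M ⊔ N = ⊤) : M = ⊤ ∨ N = ⊤ := by
  by_contra! h
  have hdec : IsCentralDecomp G {M, N} := by
    refine ⟨?_, by rwa [sSup_pair], fun J hJ hJtop => ?_⟩
    · rintro H (rfl | rfl) K (rfl | rfl) hne x hx y hy
      · exact absurd rfl hne
      · exact (mem_centralizer_iff.mp (hMN hx) y hy).symm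
      · exact mem_centralizer_iff.mp (hMN hy) x hx
      · exact absurd rfl hne
    · obtain rfl | rfl | rfl | rfl := Set.subset_pair_iff_eq.mp hJ
      · exact absurd (hJtop.symm.trans sSup_empty) (ne_bot_of_gt (Ne.lt_top h.1))
      · exact absurd (hJtop.symm.trans sSup_singleton).symm h.1
      · exact absurd (hJtop.symm.trans sSup_singleton).symm h.2
      · rfl
  exact h.1 (by simpa using (hG _ hdec).subset (Set.mem_insert M _))

theorem mem_commutator_or_zpowers_eq_top [Finite G] {p : ℕ}
    (hp : p.Prime) (hexp : ∀ x : G, x ^ p = 1) (hG : CentrallyIndecomposable G) {z : G}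
    (hz : z ∈ center G) : z ∈ commutator G ∨ zpowers z = ⊤ := by
  by_contra! ⟨hzD, hzt⟩
  obtain ⟨M, ⟨hDM, hzM⟩, hmax⟩ := Set.Finite.exists_maximalFor id
    {M : Subgroup G | commutator G ≤ M ∧ z ∉ M} (Set.toFinite _) ⟨_, le_rfl, hzD⟩
  have : M.Normal := Normal.of_commutator_le _ hDM
  have hsup : M ⊔ zpowers z = ⊤ := by
    refine eq_top_iff.mpr fun x _ => ?_
    by_cases hxM : x ∈ M
    · exact mem_sup_left hxM
    refine mem_sup_zpowers_of_mem_sup_zpowers hp (hexp x) (by_contra fun hzx => hxM ?_) hzM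
    exact hmax ⟨hDM.trans le_sup_left, hzx⟩ le_sup_left (mem_sup_right (mem_zpowers x))
  have hMz : M ≤ centralizer (zpowers z : Set G) :=
    le_centralizer_iff.mp ((zpowers_le.mpr hz).trans (center_le_centralizer _))
  exact (hG.eq_top_or_eq_top_of_sup_eq_top hMz hsup).elim
    (fun hM => hzM (hM ▸ mem_top z)) hzt

end CentrallyIndecomposable

theorem Subgroup.mem_commutator_or_zpowers_eq {G : Type*} [Group G] [Finite G] {p : ℕ}
    (hp : p.Prime) (hexp : ∀ x : G, x ^ p = 1) {H : Subgroup G} (hH : CentrallyIndecomposable H)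
    {z : G} (hzH : z ∈ H) (hz : z ∈ centralizer (H : Set G)) : z ∈ ⁅H, H⁆ ∨ zpowers z = H := by
  have hz' : (⟨z, hzH⟩ : H) ∈ center H :=
    mem_center_iff.mpr fun g => Subtype.ext (mem_centralizer_iff.mp hz g g.2)
  refine (hH.mem_commutator_or_zpowers_eq_top hp (fun x => Subtype.ext (hexp x)) hz').imp
    (fun h => ?_) (fun h => ?_)
  · rw [← H.map_subtype_commutator]
    exact ⟨_, h, rfl⟩
  · have := congrArg (map H.subtype) h
    rwa [MonoidHom.map_zpowers, ← MonoidHom.range_eq_map, range_subtype] at this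

namespace IsCentralDecomp

variable {G : Type*} [Group G] {𝓗 : Set (Subgroup G)}

theorem pairwise_le_centralizer (hcd : IsCentralDecomp G 𝓗) :
    𝓗.Pairwise fun H K => H ≤ centralizer (K : Set G) :=
  fun H hH K hK hne x hx =>
    mem_centralizer_iff.mpr fun y hy => (hcd.1 H hH K hK hne x hx y hy).eq.symm

theorem le_center_of_le_centralizer (hcd : IsCentralDecomp G 𝓗) {H : Subgroup G} (hH : H ∈ 𝓗)
    (hHH : H ≤ centralizer (H : Set G)) : H ≤ center G := by
  have htop : sSup 𝓗 ≤ centralizer (H : Set G) := sSup_le fun K hK => by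
    by_cases e : K = H
    · exact e ▸ hHH
    · exact hcd.pairwise_le_centralizer hK hH e
  rw [← centralizer_univ, ← coe_top, ← hcd.2.1]
  exact le_centralizer_iff.mp htop

theorem sSup_diff_singleton_ne_top (hcd : IsCentralDecomp G 𝓗) {K : Subgroup G} (hK : K ∈ 𝓗) :
    sSup (𝓗 \ {K}) ≠ ⊤ := fun h =>
  ((hcd.2.2 _ Set.sdiff_subset h).symm ▸ hK : K ∈ 𝓗 \ {K}).2 rfl

variable [Finite G] {p : ℕ}

theorem inf_centralizer_le_commutator (hcd : IsCentralDecomp G 𝓗) (hp : p.Prime)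
    (hexp : ∀ x : G, x ^ p = 1) {H : Subgroup G} (hH : H ∈ 𝓗) (hHc : ¬ H ≤ center G)
    (hind : CentrallyIndecomposable H) : H ⊓ centralizer (H : Set G) ≤ ⁅H, H⁆ := by
  rintro z ⟨hzH, hz⟩
  refine (mem_commutator_or_zpowers_eq hp hexp hind hzH hz).resolve_right fun hzH' => ?_
  exact hHc (hcd.le_center_of_le_centralizer hH (hzH' ▸ le_centralizer _))

theorem disjoint_sSup_diff_singleton (hcd : IsCentralDecomp G 𝓗) (hp : p.Prime)
    (hexp : ∀ x : G, x ^ p = 1) {K : Subgroup G} (hK : K ∈ 𝓗) (hKc : K ≤ center G)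
    (hind : CentrallyIndecomposable K) : Disjoint K (sSup (𝓗 \ {K})) := by
  refine disjoint_def.mpr fun {k} hkK hk =>
    by_contra fun hk1 => hcd.sSup_diff_singleton_ne_top hK ?_
  have hKK : K ≤ centralizer (K : Set G) := hKc.trans (center_le_centralizer _)
  have hKk : zpowers k = K :=
    (mem_commutator_or_zpowers_eq hp hexp hind hkK (hKK hkK)).resolve_left
      fun h => hk1 (by rwa [commutator_eq_bot_iff_le_centralizer.mpr hKK] at h)
  rw [eq_top_iff, ← hcd.2.1]
  refine sSup_le fun H hH => ?_
  by_cases e : H = K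
  · rw [e]
    exact hKk.symm.le.trans (zpowers_le.mpr hk)
  · exact le_sSup ⟨hH, e⟩

end IsCentralDecomp

theorem stmt_2_general {P : Type*} [Group P] [Finite P] {p : ℕ} (hp : p.Prime)
    (hexp : ∀ x : P, x ^ p = 1) (hclass : commutator P ≤ Subgroup.center P)
    (𝓗 : Set (Subgroup P)) (hcd : IsCentralDecomp P 𝓗)
    (hfr : ∀ H ∈ 𝓗, CentrallyIndecomposable H)
    (Q A : Subgroup P)
    (hQ : Q = sSup {H | H ∈ 𝓗 ∧ ¬ H ≤ Subgroup.center P})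
    (hA : A = sSup {H | H ∈ 𝓗 ∧ H ≤ Subgroup.center P}) :
    Q ⊓ A = ⊥ ∧ Q ⊔ A = ⊤ ∧
      ⁅Q, Q⁆ = Q ⊓ Subgroup.centralizer (Q : Set P) ∧
      ⁅Q, Q⁆ ⊔ A = Subgroup.center P := by
  have hAc : A ≤ center P := hA ▸ sSup_le fun H hH => hH.2
  have hQQc : ⁅Q, Q⁆ ≤ center P := (commutator_mono le_top le_top).trans hclass
  have hQA : Q ⊔ A = ⊤ := by
    rw [hQ, hA, ← sSup_union, ← hcd.2.1, ← Set.sep_or]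
    simp only [em', and_true, Set.ofPred_mem_eq]
  have hQA_disj : Q ⊓ A = ⊥ := by
    rw [← disjoint_iff, hA]
    refine disjoint_sSup_of_le_center (Set.toFinite _) (fun K hK => hK.2) fun K hK => ?_
    refine (hcd.disjoint_sSup_diff_singleton hp hexp hK.1 hK.2 (hfr K hK.1)).mono_right
      (sup_le (hQ ▸ sSup_le_sSup fun H hH => ⟨hH.1, fun e => hH.2 (e ▸ hK.2)⟩)
        (sSup_le_sSup (Set.sdiff_subset_sdiff_left fun H hH => hH.1)))
  have hQQ : ⁅Q, Q⁆ = Q ⊓ centralizer (Q : Set P) := by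
    refine le_antisymm (le_inf Q.commutator_le_self (hQQc.trans (center_le_centralizer _))) ?_
    have := sSup_inf_centralizer_le (Set.toFinite {H | H ∈ 𝓗 ∧ ¬ H ≤ center P})
      (hcd.pairwise_le_centralizer.mono fun H hH => hH.1) (T := ⁅Q, Q⁆) fun H hH =>
        (hcd.inf_centralizer_le_commutator hp hexp hH.1 hH.2 (hfr H hH.1)).trans
          (commutator_mono (hQ ▸ le_sSup hH) (hQ ▸ le_sSup hH))
    rwa [← hQ] at this
  refine ⟨hQA_disj, hQA, hQQ, le_antisymm (sup_le hQQc hAc) ?_⟩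
  rw [hQQ]
  exact center_le_inf_centralizer_sup hQA hAc

/-- If `𝓗` is a fully refined central decomposition of `P`, `Q` is generated by the members
not contained in the center and `A` by the central members, then `P = Q × A`,
`Q' = Z(Q)` and `Q'A = Z(P)`. -/
theorem stmt_2 {P : Type*} [Group P] [Finite P] {p : ℕ} (hp : p.Prime) (hodd : Odd p)
    (hexp : ∀ x : P, x ^ p = 1) (hclass : commutator P ≤ Subgroup.center P)
    (𝓗 : Set (Subgroup P)) (hcd : IsCentralDecomp P 𝓗)
    (hfr : ∀ H ∈ 𝓗, CentrallyIndecomposable H)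
    (Q A : Subgroup P)
    (hQ : Q = sSup {H | H ∈ 𝓗 ∧ ¬ H ≤ Subgroup.center P})
    (hA : A = sSup {H | H ∈ 𝓗 ∧ H ≤ Subgroup.center P}) :
    Q ⊓ A = ⊥ ∧ Q ⊔ A = ⊤ ∧
      ⁅Q, Q⁆ = Q ⊓ Subgroup.centralizer (Q : Set P) ∧
      ⁅Q, Q⁆ ⊔ A = Subgroup.center P :=
  stmt_2_general hp hexp hclass 𝓗 hcd hfr Q A hQ hA
end

section
/- Let P be a finite p-group of class 2 and exponent p. If 𝓗 is a central decomposition of P, then the set {HP'/P' : H ∈ 𝓗} is an orthogonal decomposition of the commutator bilinear map b : P/P' × P/P' → P' defined by b(xP', yP') = [x,y]. -/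
open scoped commutatorElement

/-! Orthogonality and spanning pass to `P/P'` directly. For minimality, a subset of the
images spanning `P/P'` comes from a subset `𝓙 ⊆ 𝓗` with `⟨𝓙⟩P' = P`; as `P'` is central,
`⟨𝓙⟩` is then normal with abelian quotient, so it contains `P'` and equals `P`, and
minimality of `𝓗` applies. -/

namespace Subgroup

variable {G : Type*} [Group G]

theorem commutator_le_of_sup_eq_top_of_le_center {H N : Subgroup G} (hN : N ≤ center G)
    (h : H ⊔ N = ⊤) : _root_.commutator G ≤ H := by
  have : H.Normal := normalizer_eq_top_iff.mp <| top_le_iff.mp <|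
    h ▸ sup_le le_normalizer (hN.trans (center_le_normalizer _))
  have hNcomm : IsMulCommutative N :=
    le_centralizer_iff_isMulCommutative.mp (hN.trans (center_le_centralizer _))
  exact Normal.commutator_le_of_self_sup_commutative_eq_top h hNcomm

theorem map_mk'_eq_top_iff (N : Subgroup G) [N.Normal] (H : Subgroup G) :
    H.map (QuotientGroup.mk' N) = ⊤ ↔ H ⊔ N = ⊤ := by
  rw [← (comap_injective (QuotientGroup.mk'_surjective N)).eq_iff, comap_map_eq,
    QuotientGroup.ker_mk', comap_top]

theorem map_mk'_commutator_eq_top_iff (hclass : _root_.commutator G ≤ center G) (H : Subgroup G) :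
    H.map (QuotientGroup.mk' (_root_.commutator G)) = ⊤ ↔ H = ⊤ := by
  rw [map_mk'_eq_top_iff]
  refine ⟨fun h ↦ ?_, fun h ↦ by rw [h, top_sup_eq]⟩
  rw [← h, sup_eq_left.mpr (commutator_le_of_sup_eq_top_of_le_center hclass h)]

theorem map_sSup {N : Type*} [Group N] (f : G →* N) (S : Set (Subgroup G)) :
    (sSup S).map f = sSup (map f '' S) := by
  rw [(gc_map_comap f).l_sSup, sSup_image]

end Subgroup

theorem stmt_3_general {P : Type*} [Group P]
    (hclass : commutator P ≤ Subgroup.center P)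
    (𝓗 : Set (Subgroup P)) (hcd : IsCentralDecomp P 𝓗)
    (b : (P ⧸ commutator P) → (P ⧸ commutator P) → (commutator P))
    (hb : ∀ x y : P,
      (b (QuotientGroup.mk x) (QuotientGroup.mk y) : P) = ⁅x, y⁆)
    (𝓧 : Set (Subgroup (P ⧸ commutator P)))
    (h𝓧 : 𝓧 = (fun H : Subgroup P => H.map (QuotientGroup.mk' (commutator P))) '' 𝓗) :
    (∀ X ∈ 𝓧, ∀ Y ∈ 𝓧, X ≠ Y → ∀ x ∈ X, ∀ y ∈ Y, b x y = 1) ∧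
    sSup 𝓧 = ⊤ ∧
    (∀ 𝓨 ⊆ 𝓧, sSup 𝓨 = ⊤ → 𝓨 = 𝓧) := by
  obtain ⟨hcomm, hgen, hmin⟩ := hcd
  set f := QuotientGroup.mk' (commutator P)
  change 𝓧 = Subgroup.map f '' 𝓗 at h𝓧
  subst h𝓧
  refine ⟨?_, ?_, fun 𝓨 h𝓨 htop ↦ ?_⟩
  · rintro _ ⟨H, hH, rfl⟩ _ ⟨K, hK, rfl⟩ hne _ ⟨x, hx, rfl⟩ _ ⟨y, hy, rfl⟩
    have hHK : H ≠ K := by rintro rfl; exact hne rfl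
    exact Subtype.ext <| (hb x y).trans <| (hcomm H hH K hK hHK x hx y hy).commutator_eq
  · rw [← Subgroup.map_sSup, hgen,
      Subgroup.map_top_of_surjective f (QuotientGroup.mk'_surjective _)]
  · have hpre : Subgroup.map f '' (𝓗 ∩ Subgroup.map f ⁻¹' 𝓨) = 𝓨 := by
      rw [Set.image_inter_preimage, Set.inter_eq_right.mpr h𝓨]
    have hJ : sSup (𝓗 ∩ Subgroup.map f ⁻¹' 𝓨) = ⊤ := by
      rw [← Subgroup.map_mk'_commutator_eq_top_iff hclass, Subgroup.map_sSup, hpre, htop]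
    rw [← hpre, hmin _ Set.inter_subset_left hJ]

/-- If `𝓗` is a central decomposition of a `p`-group `P` of class 2 and exponent `p`,
then `{HP'/P' : H ∈ 𝓗}` is an orthogonal decomposition of the commutator bilinear map
`b : P/P' × P/P' → P'`, `b(xP', yP') = [x,y]`. -/
theorem stmt_3 {P : Type*} [Group P] [Finite P] {p : ℕ} (hp : p.Prime) (hodd : Odd p)
    (hexp : ∀ x : P, x ^ p = 1) (hclass : commutator P ≤ Subgroup.center P)
    (𝓗 : Set (Subgroup P)) (hcd : IsCentralDecomp P 𝓗)
    (b : (P ⧸ commutator P) → (P ⧸ commutator P) → (commutator P))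
    (hb : ∀ x y : P,
      (b (QuotientGroup.mk x) (QuotientGroup.mk y) : P) = ⁅x, y⁆)
    (𝓧 : Set (Subgroup (P ⧸ commutator P)))
    (h𝓧 : 𝓧 = (fun H : Subgroup P => H.map (QuotientGroup.mk' (commutator P))) '' 𝓗) :
    (∀ X ∈ 𝓧, ∀ Y ∈ 𝓧, X ≠ Y → ∀ x ∈ X, ∀ y ∈ Y, b x y = 1) ∧
    sSup 𝓧 = ⊤ ∧
    (∀ 𝓨 ⊆ 𝓧, sSup 𝓨 = ⊤ → 𝓨 = 𝓧) :=
  stmt_3_general hclass 𝓗 hcd b hb 𝓧 h𝓧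
end

section
/- Let b : V × V → W be ⊥-indecomposable (admitting only the trivial orthogonal decomposition {V}). Then every self-adjoint endomorphism x ∈ Sym(b) is either invertible or nilpotent. -/
/-- If `b` is `⊥`-indecomposable, then every self-adjoint endomorphism is either
invertible or nilpotent. -/
theorem stmt_11 {k V W : Type*} [Field k] [AddCommGroup V] [Module k V]
    [FiniteDimensional k V] [AddCommGroup W] [Module k W]
    (b : V →ₗ[k] V →ₗ[k] W)
    (hind : ∀ X Y : Submodule k V, IsCompl X Y →
      (∀ x ∈ X, ∀ y ∈ Y, b x y = 0 ∧ b y x = 0) → X = ⊥ ∨ Y = ⊥) :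
    ∀ f : Module.End k V, (∀ u v : V, b (f u) v = b u (f v)) →
      Function.Bijective f ∨ IsNilpotent f := by
  intro f hf
  -- f^n is self-adjoint for all n
  have hpow : ∀ n : ℕ, ∀ u v : V, b ((f ^ n) u) v = b u ((f ^ n) v) := by
    intro n
    induction n with
    | zero => simp
    | succ m ih =>
      intro u v
      simp only [pow_succ, Module.End.mul_apply]
      rw [ih, hf, ← Module.End.mul_apply, ← Module.End.mul_apply, ← pow_succ', pow_succ]
  obtain ⟨m, hm⟩ := Filter.eventually_atTop.mp
    (f.eventually_isCompl_ker_pow_range_pow.and (Filter.eventually_ge_atTop 1))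
  obtain ⟨hn, hn1⟩ := hm (max m 1) (le_max_left _ _)
  set n := max m 1
  have horth : ∀ x ∈ LinearMap.ker (f ^ n), ∀ y ∈ LinearMap.range (f ^ n),
      b x y = 0 ∧ b y x = 0 := by
    rintro x hx y ⟨z, rfl⟩
    rw [LinearMap.mem_ker] at hx
    constructor
    · rw [← hpow, hx]; simp
    · rw [hpow, hx]; simp
  rcases hind _ _ hn horth with h | h
  · left
    have hinj : Function.Injective f := by
      rw [← LinearMap.ker_eq_bot, eq_bot_iff]
      intro x hx
      have : x ∈ LinearMap.ker (f ^ n) := by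
        rw [LinearMap.mem_ker] at hx ⊢
        obtain ⟨m, hm'⟩ := Nat.exists_eq_add_of_le hn1
        rw [hm', add_comm, pow_succ, Module.End.mul_apply, hx, map_zero]
      rw [h] at this
      exact this
    exact ⟨hinj, LinearMap.surjective_of_injective hinj⟩
  · right
    exact ⟨n, LinearMap.range_eq_bot.mp h⟩
end

section
/- Let K be a finite field of odd characteristic and d, d' two nondegenerate symmetric bilinear forms of the same dimension n over K. Then d and d' are isometric if and only if their discriminants det(D), det(D') agree modulo squares (K^×)². -/
/-!
Congruence `A ↦ P A Pᵀ` multiplies the determinant by the square `(det P)²`, which gives one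
direction. Conversely, in characteristic `≠ 2` every symmetric matrix is congruent to a diagonal
one. Over a finite field of odd order every binary form `⟨a, b⟩` with `a b ≠ 0` represents `1`
(`a x²` and `1 - b y²` each take `(q + 1) / 2` values, so they meet), hence `⟨a, b⟩ ≅ ⟨1, a b⟩`.
Sweeping this through the diagonal shows that a nondegenerate form is congruent to
`⟨1, …, 1, det⟩`, and rescaling the last basis vector changes `det` by an arbitrary nonzero square.
-/

namespace Matrix

variable {ι κ R : Type*} [Fintype ι] [DecidableEq ι] [Fintype κ] [DecidableEq κ]

def Congruent [CommRing R] (A B : Matrix ι ι R) : Prop :=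
  ∃ P : Matrix ι ι R, IsUnit P.det ∧ P * A * Pᵀ = B

namespace Congruent

variable [CommRing R] {A B C : Matrix ι ι R}

theorem refl (A : Matrix ι ι R) : A.Congruent A :=
  ⟨1, by simp, by simp⟩

theorem symm (h : A.Congruent B) : B.Congruent A := by
  obtain ⟨P, hP, rfl⟩ := h
  refine ⟨P⁻¹, isUnit_nonsing_inv_det P hP, ?_⟩
  rw [transpose_nonsing_inv, Matrix.mul_assoc, Matrix.mul_assoc,
    mul_nonsing_inv _ (by rwa [det_transpose]), mul_one, ← Matrix.mul_assoc,
    nonsing_inv_mul _ hP, one_mul]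

theorem trans (h₁ : A.Congruent B) (h₂ : B.Congruent C) : A.Congruent C := by
  obtain ⟨P, hP, rfl⟩ := h₁
  obtain ⟨Q, hQ, rfl⟩ := h₂
  exact ⟨Q * P, by rw [det_mul]; exact hQ.mul hP, by simp only [transpose_mul, Matrix.mul_assoc]⟩

theorem exists_det_eq (h : A.Congruent B) : ∃ c : R, IsUnit c ∧ B.det = c ^ 2 * A.det := by
  obtain ⟨P, hP, rfl⟩ := h
  exact ⟨P.det, hP, by rw [det_mul, det_mul, det_transpose]; ring⟩

theorem reindex (e : ι ≃ κ) (h : A.Congruent B) :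
    (reindex e e A).Congruent (reindex e e B) := by
  obtain ⟨P, hP, rfl⟩ := h
  exact ⟨reindex e e P, by rwa [det_reindex_self], by
    simp only [reindex_apply, transpose_submatrix, submatrix_mul_equiv]⟩

theorem fromBlocks {A' B' : Matrix κ κ R} (h : A.Congruent B) (h' : A'.Congruent B') :
    (fromBlocks A 0 0 A').Congruent (fromBlocks B 0 0 B') := by
  obtain ⟨P, hP, rfl⟩ := h
  obtain ⟨Q, hQ, rfl⟩ := h'
  exact ⟨Matrix.fromBlocks P 0 0 Q, by rw [det_fromBlocks_zero₁₂]; exact hP.mul hQ, by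
    simp [fromBlocks_transpose, fromBlocks_multiply]⟩

end Congruent

theorem diagonal_append_eq_reindex_fromBlocks [Zero R] {m n : ℕ} (p : Fin m → R)
    (q : Fin n → R) :
    diagonal (Fin.append p q) =
      Matrix.reindex finSumFinEquiv finSumFinEquiv (fromBlocks (diagonal p) 0 0 (diagonal q)) := by
  rw [fromBlocks_diagonal, reindex_apply, submatrix_diagonal_equiv, ← Fin.append_comp_sumElim]
  exact congrArg diagonal (funext fun i => congrArg _ (finSumFinEquiv.apply_symm_apply i).symm)

theorem Congruent.diagonal_append [CommRing R] {m n : ℕ} {p q : Fin m → R} {p' q' : Fin n → R}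
    (h : (diagonal p).Congruent (diagonal q)) (h' : (diagonal p').Congruent (diagonal q')) :
    (diagonal (Fin.append p p')).Congruent (diagonal (Fin.append q q')) := by
  rw [diagonal_append_eq_reindex_fromBlocks, diagonal_append_eq_reindex_fromBlocks]
  exact (h.fromBlocks h').reindex _

theorem congruent_diagonal_mul_sq [CommRing R] (d : ι → R) {c : ι → R} (hc : ∀ i, IsUnit (c i)) :
    (diagonal d).Congruent (diagonal fun i => c i ^ 2 * d i) :=
  ⟨diagonal c, by rw [det_diagonal]; exact IsUnit.prod_univ_iff.mpr hc, by
    simp only [diagonal_transpose, diagonal_mul_diagonal]; congr; ext i; ring⟩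

theorem congruent_diagonal_mulSingle_mul_sq [CommRing R] {s : R} (hs : IsUnit s) (i : ι) (δ : R) :
    (diagonal (Pi.mulSingle i δ)).Congruent (diagonal (Pi.mulSingle i (s ^ 2 * δ))) := by
  convert congruent_diagonal_mul_sq (Pi.mulSingle i δ) (c := Pi.mulSingle i s) fun j => ?_ using 2
  · ext j
    rcases eq_or_ne j i with rfl | hj <;> simp [*]
  · rcases eq_or_ne j i with rfl | hj <;> simp [*]

theorem IsSymm.exists_congruent_diagonal {K : Type*} [Field K] [Invertible (2 : K)]
    {D : Matrix ι ι K} (hD : D.IsSymm) : ∃ g : ι → K, D.Congruent (diagonal g) := by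
  let b := Pi.basisFun K ι
  obtain ⟨v, hv⟩ : ∃ v : Module.Basis ι K (ι → K), D.toBilin'.IsOrthoᵢ v := by
    obtain ⟨v₀, hv₀⟩ := LinearMap.BilinForm.exists_orthogonal_basis
      (LinearMap.BilinForm.isSymm_iff.mp (isSymm_toBilin'_iff_isSymm.mpr hD))
    refine ⟨v₀.reindex (v₀.indexEquiv b), fun i j hij => ?_⟩
    simp only [Function.onFun, Module.Basis.reindex_apply]
    exact hv₀ ((v₀.indexEquiv b).symm.injective.ne hij)
  have hBb : D.toBilin'.toMatrix b = D := by
    rw [LinearMap.BilinForm.toMatrix_basisFun, LinearMap.BilinForm.toMatrix'_toBilin']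
  have hBv : D.toBilin'.toMatrix v = diagonal fun i => D.toBilin' (v i) (v i) := by
    ext i j
    rcases eq_or_ne i j with rfl | hij
    · simp [LinearMap.BilinForm.toMatrix_apply]
    · rw [LinearMap.BilinForm.toMatrix_apply, diagonal_apply_ne _ hij,
        LinearMap.isOrthoᵢ_def.mp hv i j hij]
  have := b.invertibleToMatrix v
  refine ⟨fun i => D.toBilin' (v i) (v i), (b.toMatrix v)ᵀ,
    by rw [det_transpose]; exact isUnit_det_of_invertible _, ?_⟩
  rw [transpose_transpose, ← hBv, ← LinearMap.BilinForm.toMatrix_mul_basis_toMatrix b, hBb]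

end Matrix

theorem Fin.append_one_eq_snoc_mulSingle {M : Type*} [One M] {n : ℕ} (a b : M) :
    Fin.append (1 : Fin n → M) ![a, b] =
      Fin.snoc (α := fun _ => M) (Pi.mulSingle (Fin.last n) a) b := by
  ext i
  refine Fin.addCases (fun i => ?_) (fun j => ?_) i
  · simp [Pi.mulSingle_apply, Fin.ext_iff, Fin.snoc]
    omega
  · fin_cases j <;> simp [Pi.mulSingle_apply, Fin.ext_iff, Fin.snoc]

theorem Fin.append_one_eq_mulSingle_last {M : Type*} [One M] {n : ℕ} (a : M) :
    Fin.append (1 : Fin n → M) ![1, a] = Pi.mulSingle (Fin.last (n + 1)) a := by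
  ext i
  refine Fin.addCases (fun i => ?_) (fun j => ?_) i
  · simp [Pi.mulSingle_apply, Fin.ext_iff]
    omega
  · fin_cases j <;> simp [Pi.mulSingle_apply, Fin.ext_iff]

open Matrix

namespace FiniteField

variable {K : Type*} [Field K] [Fintype K]

theorem exists_mul_sq_add_mul_sq_eq (hK : ringChar K ≠ 2) {a b : K} (ha : a ≠ 0) (hb : b ≠ 0)
    (t : K) : ∃ x y : K, a * x ^ 2 + b * y ^ 2 = t := by
  open Polynomial in
  obtain ⟨x, y, h⟩ := exists_root_sum_quadratic (f := C a * X ^ 2 - C t) (g := C b * X ^ 2)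
    (by compute_degree!) (by compute_degree!) (odd_card_of_char_ne_two hK)
  simp only [eval_sub, eval_mul, eval_C, eval_pow, eval_X] at h
  exact ⟨x, y, by linear_combination h⟩

theorem congruent_diagonal_pair (hK : ringChar K ≠ 2) {a b : K} (ha : a ≠ 0) (hb : b ≠ 0) :
    (diagonal ![a, b]).Congruent (diagonal ![1, a * b]) := by
  obtain ⟨x, y, hxy⟩ := exists_mul_sq_add_mul_sq_eq hK ha hb 1
  -- the rows of `P` are orthogonal for `⟨a, b⟩`, with squared lengths `1` and `a b`
  refine ⟨!![x, y; -b * y, a * x], ?_, ?_⟩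
  · rw [det_fin_two_of, show x * (a * x) - y * (-b * y) = 1 by linear_combination hxy]
    exact isUnit_one
  · ext i j
    fin_cases i <;> fin_cases j <;> simp [vecMul, dotProduct, Fin.sum_univ_two]
    · linear_combination hxy
    · ring
    · ring
    · linear_combination a * b * hxy

theorem congruent_diagonal_mulSingle_prod (hK : ringChar K ≠ 2) {n : ℕ} {d : Fin (n + 1) → K}
    (hd : ∏ i, d i ≠ 0) :
    (diagonal d).Congruent (diagonal (Pi.mulSingle (Fin.last n) (∏ i, d i))) := by
  induction n with
  | zero =>
    convert Matrix.Congruent.refl (diagonal d)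
    ext i; fin_cases i; simp
  | succ n ih =>
    rw [Fin.prod_univ_castSucc] at hd ⊢
    obtain ⟨hδ, hb⟩ := mul_ne_zero_iff.mp hd
    have h₁ := (ih (d := Fin.init d) hδ).diagonal_append
      (Matrix.Congruent.refl (diagonal ![d (Fin.last _)]))
    rw [Fin.append_right_eq_snoc, Fin.append_right_eq_snoc, cons_val_zero,
      Fin.snoc_init_self, ← Fin.append_one_eq_snoc_mulSingle] at h₁
    rw [← Fin.append_one_eq_mulSingle_last]
    exact h₁.trans ((Matrix.Congruent.refl _).diagonal_append (congruent_diagonal_pair hK hδ hb))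

theorem congruent_diagonal_mulSingle_det (hK : ringChar K ≠ 2) {n : ℕ}
    {D : Matrix (Fin (n + 1)) (Fin (n + 1)) K} (hD : D.IsSymm) (hdet : IsUnit D.det) :
    D.Congruent (diagonal (Pi.mulSingle (Fin.last n) D.det)) := by
  have : Invertible (2 : K) := invertibleOfNonzero (Ring.two_ne_zero hK)
  obtain ⟨g, hg⟩ := hD.exists_congruent_diagonal
  obtain ⟨u, hu, hgdet⟩ := hg.exists_det_eq
  rw [det_diagonal] at hgdet
  have hg0 : ∏ i, g i ≠ 0 := hgdet ▸ ((hu.pow 2).mul hdet).ne_zero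
  refine hg.trans ((congruent_diagonal_mulSingle_prod hK hg0).trans ?_)
  rw [hgdet]
  exact (congruent_diagonal_mulSingle_mul_sq hu _ _).symm

end FiniteField

/-- Two nondegenerate symmetric bilinear forms of the same dimension over a finite field of
odd characteristic are isometric iff their discriminants agree modulo squares. -/
theorem stmt_15 {K : Type*} [Field K] [Fintype K] (hchar : ringChar K ≠ 2)
    {n : ℕ} (D D' : Matrix (Fin n) (Fin n) K)
    (hD : D.IsSymm) (hD' : D'.IsSymm) (hDdet : IsUnit D.det) (hD'det : IsUnit D'.det) :
    (∃ A : Matrix (Fin n) (Fin n) K, IsUnit A.det ∧ A * D' * A.transpose = D) ↔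
      ∃ c : K, c ≠ 0 ∧ D.det = c ^ 2 * D'.det := by
  constructor
  · intro h
    obtain ⟨c, hc, hdet⟩ := Matrix.Congruent.exists_det_eq h
    exact ⟨c, hc.ne_zero, hdet⟩
  · rintro ⟨c, hc, hdet⟩
    cases n with
    | zero => exact Subsingleton.elim D' D ▸ Matrix.Congruent.refl D'
    | succ n =>
      have hDnormal := FiniteField.congruent_diagonal_mulSingle_det hchar hD hDdet
      rw [hdet] at hDnormal
      exact (FiniteField.congruent_diagonal_mulSingle_det hchar hD' hD'det).trans
        ((congruent_diagonal_mulSingle_mul_sq hc.isUnit _ _).trans hDnormal.symm)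
end

section
/- Let d : V × V → K be a nondegenerate symmetric bilinear form over a finite field K of odd characteristic, and fix a nonsquare ω ∈ K. If 𝓧 and 𝓨 are two orthogonal bases of V with exactly s (respectively r) basis vectors x satisfying d(x,x) ∉ (K^×)², then s ≡ r mod 2. -/
/-!
Changing basis replaces the Gram matrix `G` by `Pᵀ G P`, so the determinant of the Gram matrix is
well defined up to a nonzero square, and its quadratic character is an invariant. For an orthogonal
basis the Gram matrix is diagonal with nonzero entries `d(xᵢ, xᵢ)`, so this character is `(-1) ^ s`.
-/

open Finset Matrix LinearMap

theorem LinearMap.toMatrix₂_eq_diagonal_of_isOrthoᵢ {R M n : Type*} [CommRing R] [AddCommGroup M]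
    [Module R M] [Fintype n] [DecidableEq n] {B : M →ₗ[R] M →ₗ[R] R} {b : Module.Basis n R M}
    (hb : B.IsOrthoᵢ b) : toMatrix₂ b b B = diagonal fun i => B (b i) (b i) := by
  ext i j
  rw [toMatrix₂_apply]
  obtain rfl | hij := eq_or_ne i j
  · rw [diagonal_apply_eq]
  · rw [diagonal_apply_ne _ hij, hb hij]

theorem LinearMap.det_toMatrix₂_basis_change {R M n : Type*} [CommRing R] [AddCommGroup M]
    [Module R M] [Fintype n] [DecidableEq n] (B : M →ₗ[R] M →ₗ[R] R) (b c : Module.Basis n R M) :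
    (toMatrix₂ c c B).det = (b.toMatrix c).det ^ 2 * (toMatrix₂ b b B).det := by
  rw [← toMatrix₂_mul_basis_toMatrix b b c c B, det_mul, det_mul, det_transpose]
  ring

section FiniteField

variable {K : Type*} [Field K] [Fintype K] [DecidableEq K]

theorem quadraticChar_sq_mul {a c : K} (hc : c ≠ 0) :
    quadraticChar K (c ^ 2 * a) = quadraticChar K a := by
  rw [map_mul, quadraticChar_sq_one' hc, one_mul]

theorem quadraticChar_prod_eq_neg_one_pow_card {ι : Type*} [Fintype ι] {a : ι → K}
    (ha : ∀ i, a i ≠ 0) :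
    quadraticChar K (∏ i, a i) = (-1) ^ Nat.card {i // ¬ IsSquare (a i)} := by
  classical
  have hχ : ∀ i, quadraticChar K (a i) = if IsSquare (a i) then 1 else -1 := fun i => by
    split_ifs with h
    · exact (quadraticChar_one_iff_isSquare (ha i)).mpr h
    · exact quadraticChar_neg_one_iff_not_isSquare.mpr h
  rw [map_prod, Finset.prod_congr rfl fun i _ => hχ i, prod_ite, prod_const, prod_const, one_pow,
    one_mul, Nat.card_eq_fintype_card, Fintype.card_subtype]

theorem LinearMap.quadraticChar_det_toMatrix₂_eq {V n : Type*} [AddCommGroup V] [Module K V]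
    [Fintype n] [DecidableEq n] (B : V →ₗ[K] V →ₗ[K] K) (b c : Module.Basis n K V) :
    quadraticChar K (toMatrix₂ c c B).det = quadraticChar K (toMatrix₂ b b B).det := by
  have : Invertible (b.toMatrix c) := b.invertibleToMatrix c
  rw [det_toMatrix₂_basis_change B b c,
    quadraticChar_sq_mul (isUnit_det_of_invertible _).ne_zero]

theorem LinearMap.quadraticChar_det_toMatrix₂_of_isOrthoᵢ {V n : Type*} [AddCommGroup V]
    [Module K V] [Fintype n] [DecidableEq n] {B : V →ₗ[K] V →ₗ[K] K} (hB : B.SeparatingLeft)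
    {b : Module.Basis n K V} (hb : B.IsOrthoᵢ b) :
    quadraticChar K (toMatrix₂ b b B).det = (-1) ^ Nat.card {i // ¬ IsSquare (B (b i) (b i))} := by
  rw [toMatrix₂_eq_diagonal_of_isOrthoᵢ hb, det_diagonal]
  exact quadraticChar_prod_eq_neg_one_pow_card (hb.not_isOrtho_basis_self_of_separatingLeft hB)

end FiniteField

theorem Nat.mod_two_eq_of_neg_one_pow_eq {m n : ℕ} (h : (-1 : ℤ) ^ m = (-1) ^ n) :
    m % 2 = n % 2 := by
  rw [neg_one_pow_eq_pow_mod_two, neg_one_pow_eq_pow_mod_two (n := n)] at h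
  rcases Nat.mod_two_eq_zero_or_one m with hm | hm <;>
    rcases Nat.mod_two_eq_zero_or_one n with hn | hn <;> simp_all

theorem stmt_16_general {K V : Type*} [Field K] [Fintype K]
    [AddCommGroup V] [Module K V] (d : V →ₗ[K] V →ₗ[K] K)
    (hnd : ∀ u : V, (∀ v : V, d u v = 0) → u = 0)
    {n : ℕ} (x y : Module.Basis (Fin n) K V)
    (hx : ∀ i j, i ≠ j → d (x i) (x j) = 0)
    (hy : ∀ i j, i ≠ j → d (y i) (y j) = 0) :
    Nat.card {i : Fin n // ¬ IsSquare (d (x i) (x i))} % 2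
      = Nat.card {i : Fin n // ¬ IsSquare (d (y i) (y i))} % 2 := by
  classical
  apply Nat.mod_two_eq_of_neg_one_pow_eq
  rw [← quadraticChar_det_toMatrix₂_of_isOrthoᵢ hnd hx,
    ← quadraticChar_det_toMatrix₂_of_isOrthoᵢ hnd hy, quadraticChar_det_toMatrix₂_eq d x y]

/-- For a nondegenerate symmetric bilinear form over a finite field of odd characteristic,
the number of vectors `x` in an orthogonal basis with `d(x,x)` a nonsquare is well defined
modulo 2. -/
theorem stmt_16 {K V : Type*} [Field K] [Fintype K] (hchar : ringChar K ≠ 2)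
    [AddCommGroup V] [Module K V] (d : V →ₗ[K] V →ₗ[K] K)
    (hsymm : ∀ u v : V, d u v = d v u)
    (hnd : ∀ u : V, (∀ v : V, d u v = 0) → u = 0)
    {n : ℕ} (x y : Module.Basis (Fin n) K V)
    (hx : ∀ i j, i ≠ j → d (x i) (x j) = 0)
    (hy : ∀ i j, i ≠ j → d (y i) (y j) = 0) :
    Nat.card {i : Fin n // ¬ IsSquare (d (x i) (x i))} % 2
      = Nat.card {i : Fin n // ¬ IsSquare (d (y i) (y i))} % 2 :=
  stmt_16_general d hnd x y hx hy
end

section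
/- Let b : V × V → W and b' : V' × V' → W' be nondegenerate bilinear maps over a field k. Then Adj(b ⊕ b') = Adj(b) ⊕ Adj(b'): an endomorphism of V ⊕ V' admits an adjoint with respect to the orthogonal direct sum b ⊕ b' if and only if it preserves V and V' and its restrictions admit adjoints with respect to b and b' respectively. -/
/-- `Adj(b ⊕ b') = Adj(b) ⊕ Adj(b')`: an endomorphism of `V ⊕ V'` is adjointable for the
orthogonal direct sum iff it preserves `V` and `V'` and its restrictions are adjointable. -/
theorem stmt_18 {k V W V' W' : Type*} [Field k]
    [AddCommGroup V] [Module k V] [AddCommGroup W] [Module k W]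
    [AddCommGroup V'] [Module k V'] [AddCommGroup W'] [Module k W']
    (b : V →ₗ[k] V →ₗ[k] W) (b' : V' →ₗ[k] V' →ₗ[k] W')
    (hnd₁ : ∀ u : V, (∀ v : V, b u v = 0) → u = 0)
    (hnd₂ : ∀ v : V, (∀ u : V, b u v = 0) → v = 0)
    (hnd₁' : ∀ u : V', (∀ v : V', b' u v = 0) → u = 0)
    (hnd₂' : ∀ v : V', (∀ u : V', b' u v = 0) → v = 0)
    (B : (V × V') →ₗ[k] (V × V') →ₗ[k] (W × W'))
    (hB : ∀ (u : V) (u' : V') (v : V) (v' : V'),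
      B (u, u') (v, v') = (b u v, b' u' v')) :
    ∀ f : Module.End k (V × V'),
      (∃ g : Module.End k (V × V'), ∀ x y : V × V', B (f x) y = B x (g y)) ↔
      (∃ (f₁ : Module.End k V) (f₂ : Module.End k V'),
        (∀ x : V × V', f x = (f₁ x.1, f₂ x.2)) ∧
        (∃ g₁ : Module.End k V, ∀ u v : V, b (f₁ u) v = b u (g₁ v)) ∧
        (∃ g₂ : Module.End k V', ∀ u v : V', b' (f₂ u) v = b' u (g₂ v))) := by

  intro f
  constructor
  · rintro ⟨g, hg⟩
    -- f preserves the summands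
    have hf2 : ∀ u : V, (f (u, 0)).2 = 0 := by
      intro u
      apply hnd₁'
      intro v'
      have h := hg (u, 0) (0, v')
      have h1 : B (f (u, 0)) (0, v') = (b (f (u, 0)).1 0, b' (f (u, 0)).2 v') := by
        rw [← hB]
      have h2 : B (u, 0) (g (0, v')) = (b u (g (0, v')).1, b' 0 (g (0, v')).2) := by
        rw [← hB]
      rw [h1, h2] at h
      have := congrArg Prod.snd h
      simpa using this
    have hf1 : ∀ u' : V', (f (0, u')).1 = 0 := by
      intro u'
      apply hnd₁
      intro v
      have h := hg (0, u') (v, 0)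
      have h1 : B (f (0, u')) (v, 0) = (b (f (0, u')).1 v, b' (f (0, u')).2 0) := by
        rw [← hB]
      have h2 : B (0, u') (g (v, 0)) = (b 0 (g (v, 0)).1, b' u' (g (v, 0)).2) := by
        rw [← hB]
      rw [h1, h2] at h
      have := congrArg Prod.fst h
      simpa using this
    -- g preserves the summands
    have hg2 : ∀ v : V, (g (v, 0)).2 = 0 := by
      intro v
      apply hnd₂'
      intro u'
      have h := hg (0, u') (v, 0)
      have h1 : B (f (0, u')) (v, 0) = (b (f (0, u')).1 v, b' (f (0, u')).2 0) := by
        rw [← hB]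
      have h2 : B (0, u') (g (v, 0)) = (b 0 (g (v, 0)).1, b' u' (g (v, 0)).2) := by
        rw [← hB]
      rw [h1, h2] at h
      have := congrArg Prod.snd h
      simpa using this.symm
    have hg1 : ∀ v' : V', (g (0, v')).1 = 0 := by
      intro v'
      apply hnd₂
      intro u
      have h := hg (u, 0) (0, v')
      have h1 : B (f (u, 0)) (0, v') = (b (f (u, 0)).1 0, b' (f (u, 0)).2 v') := by
        rw [← hB]
      have h2 : B (u, 0) (g (0, v')) = (b u (g (0, v')).1, b' 0 (g (0, v')).2) := by
        rw [← hB]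
      rw [h1, h2] at h
      have := congrArg Prod.fst h
      simpa using this.symm
    refine ⟨(LinearMap.fst k V V') ∘ₗ f ∘ₗ (LinearMap.inl k V V'),
            (LinearMap.snd k V V') ∘ₗ f ∘ₗ (LinearMap.inr k V V'), ?_, ?_, ?_⟩
    · intro x
      have hx : (x.1, x.2) = (x.1, (0:V')) + ((0:V), x.2) := by simp
      have : f x = f (x.1, 0) + f (0, x.2) := by
        conv_lhs => rw [show x = (x.1, (0:V')) + ((0:V), x.2) by simp]
        exact map_add f _ _
      rw [this]
      ext
      · simp [hf1 x.2]
      · simp [hf2 x.1]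
    · refine ⟨(LinearMap.fst k V V') ∘ₗ g ∘ₗ (LinearMap.inl k V V'), ?_⟩
      intro u v
      have h := hg (u, 0) (v, 0)
      have h1 : B (f (u, 0)) (v, 0) = (b (f (u, 0)).1 v, b' (f (u, 0)).2 0) := by
        rw [← hB]
      have h2 : B (u, 0) (g (v, 0)) = (b u (g (v, 0)).1, b' 0 (g (v, 0)).2) := by
        rw [← hB]
      rw [h1, h2] at h
      have := congrArg Prod.fst h
      simpa using this
    · refine ⟨(LinearMap.snd k V V') ∘ₗ g ∘ₗ (LinearMap.inr k V V'), ?_⟩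
      intro u v
      have h := hg (0, u) (0, v)
      have h1 : B (f (0, u)) (0, v) = (b (f (0, u)).1 0, b' (f (0, u)).2 v) := by
        rw [← hB]
      have h2 : B (0, u) (g (0, v)) = (b 0 (g (0, v)).1, b' u (g (0, v)).2) := by
        rw [← hB]
      rw [h1, h2] at h
      have := congrArg Prod.snd h
      simpa using this
  · rintro ⟨f₁, f₂, hf, ⟨g₁, hg₁⟩, ⟨g₂, hg₂⟩⟩
    refine ⟨LinearMap.prodMap g₁ g₂, ?_⟩
    intro x y
    rw [hf x]
    have h1 : B (f₁ x.1, f₂ x.2) (y.1, y.2) = (b (f₁ x.1) y.1, b' (f₂ x.2) y.2) := hB _ _ _ _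
    have h2 : B (x.1, x.2) (g₁ y.1, g₂ y.2) = (b x.1 (g₁ y.1), b' x.2 (g₂ y.2)) := hB _ _ _ _
    simp only [LinearMap.prodMap_apply]
    calc B (f₁ x.1, f₂ x.2) y = B (f₁ x.1, f₂ x.2) (y.1, y.2) := by rw [Prod.mk.eta]
    _ = (b x.1 (g₁ y.1), b' x.2 (g₂ y.2)) := by rw [h1, hg₁, hg₂]
    _ = B (x.1, x.2) (g₁ y.1, g₂ y.2) := h2.symm
    _ = B x (g₁ y.1, g₂ y.2) := by rw [Prod.mk.eta]
end
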